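/- arXiv:2203.09190 — 10 statements merged into one kernel-verified Lean document; each statement's English description precedes it below -/
import Mathlib

section
/- Under the radial network encoding, the matrix 1 − G is invertible, and its inverse H := (1 − G)⁻¹ satisfies, for all k l : Fin n, H k l = 1 if bus k lies on the path from the slack bus to bus l or k = l (precisely, if Relation.ReflTransGen (fun a b => up a = some b) l k holds), and H k l = 0 otherwise. -/
/-!
Let `G k l = 1` iff `k` is the parent of `l`, and `H k l = 1` iff `k` is `l` or an ancestor of
`l`. The ancestors-or-self of `l` are `l` together with the ancestors-or-self of its parent;
entrywise this is `H = 1 + H G`, i.e. `H (1 - G) = 1`. The two parts are disjoint because parents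
have smaller index, so no bus is its own proper ancestor.
-/

open Matrix
open scoped Classical

theorem Relation.TransGen.lt_of_anti {α β : Type*} [Preorder β] {r : α → α → Prop}
    (f : α → β) (hf : ∀ a b, r a b → f b < f a) {a b : α} (h : Relation.TransGen r a b) :
    f b < f a := by
  induction h with
  | single hab => exact hf _ _ hab
  | tail _ hbc ih => exact (hf _ _ hbc).trans ih

namespace Matrix

variable {ι R : Type*}

def parentMatrix [DecidableEq ι] [Zero R] [One R] (up : ι → Option ι) : Matrix ι ι R :=
  of fun k l => if up l = some k then 1 else 0

noncomputable def ancestorMatrix [Zero R] [One R] (up : ι → Option ι) : Matrix ι ι R :=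
  of fun k l => if Relation.ReflTransGen (fun a b => up a = some b) l k then 1 else 0

theorem mul_parentMatrix_apply [Fintype ι] [DecidableEq ι] [NonAssocSemiring R]
    (up : ι → Option ι) (M : Matrix ι ι R) (k l : ι) :
    (M * parentMatrix up : Matrix ι ι R) k l = (up l).elim 0 (M k) := by
  cases h : up l <;> simp [mul_apply, parentMatrix, h]

theorem ancestorMatrix_mul_one_sub_parentMatrix [Fintype ι] [DecidableEq ι] [Ring R]
    (up : ι → Option ι)
    (hacyc : ∀ a, ¬ Relation.TransGen (fun a b => up a = some b) a a) :
    ancestorMatrix up * (1 - parentMatrix up) = (1 : Matrix ι ι R) := by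
  ext k l
  rw [mul_sub, mul_one, sub_apply, mul_parentMatrix_apply, one_apply]
  simp only [ancestorMatrix, of_apply]
  rw [Relation.ReflTransGen.cases_head_iff]
  cases hl : up l with
  | none => simp [eq_comm]
  | some p =>
    by_cases hpk : Relation.ReflTransGen (fun a b => up a = some b) p k
    · have hkl : k ≠ l := by
        rintro rfl
        exact hacyc k (Relation.TransGen.head' hl hpk)
      simp [hpk, hkl]
    · simp [hpk, eq_comm]

end Matrix

/-- Under the radial network encoding, `1 - G` is invertible and its inverse
`H := (1 - G)⁻¹` has entry `1` at `(k, l)` exactly when bus `k` lies on the path from the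
slack bus to bus `l` or `k = l`, and `0` otherwise. -/
theorem stmt0 (n : ℕ) (up : Fin n → Option (Fin n))
    (hup : ∀ l k, up l = some k → (k : ℕ) < (l : ℕ)) :
    IsUnit (1 - Matrix.of (fun k l : Fin n => if up l = some k then (1 : ℝ) else 0)) ∧
    ∀ k l : Fin n,
      (1 - Matrix.of (fun k l : Fin n => if up l = some k then (1 : ℝ) else 0))⁻¹ k l =
        if Relation.ReflTransGen (fun a b => up a = some b) l k then 1 else 0 := by
  have hacyc (a : Fin n) : ¬ Relation.TransGen (fun a b => up a = some b) a a := fun h =>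
    lt_irrefl _ (h.lt_of_anti (fun x : Fin n => (x : ℕ)) hup)
  have hinv := ancestorMatrix_mul_one_sub_parentMatrix (R := ℝ) up hacyc
  change IsUnit (1 - parentMatrix (R := ℝ) up) ∧
    ∀ k l, (1 - parentMatrix (R := ℝ) up)⁻¹ k l = ancestorMatrix (R := ℝ) up k l
  rw [inv_eq_left_inv hinv]
  exact ⟨IsUnit.of_mul_eq_one_right _ hinv, fun _ _ => rfl⟩
end

section
/- Let n : ℕ, let G : Matrix (Fin n) (Fin n) ℝ with 1 − G invertible and H := (1 − G)⁻¹, let r, x, g, b, p, q, f, e : Fin n → ℝ and v₀ : ℝ. Set M₁ := 2·diag(r)·H·diag(g), M₂ := 2·diag(x)·H·diag(b), A := 1 − Gᵀ + M₁ + M₂, and assume A is invertible with C := A⁻¹; set D := 2·C·diag(r)·(H − 1)·diag(r) + 2·C·diag(x)·(H − 1)·diag(x) + C·diag(fun l => (r l)^2 + (x l)^2). If v, v̂ : Fin n → ℝ satisfy A.mulVec v = v₀ • e − 2·diag(r)·H.mulVec p − 2·diag(x)·H.mulVec q + (−2·diag(r)·H·diag(r) − 2·diag(x)·H·diag(x)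 + diag(fun l => (r l)^2 + (x l)^2)).mulVec f and A.mulVec v̂ = v₀ • e − 2·diag(r)·H.mulVec p − 2·diag(x)·H.mulVec q, then v = v̂ − D.mulVec f (equation (19) of the paper). -/
/-! The two systems share the matrix `A` and differ only by the loss term `B f` on the
right, so `v - v̂ = A⁻¹ B f`. Writing `diag(r² + x²) = diag(r)² + diag(x)²`, the matrix
`A⁻¹ B` expands to exactly `-D`. -/

open Matrix

noncomputable section

def Hmat {n : ℕ} (G : Matrix (Fin n) (Fin n) ℝ) : Matrix (Fin n) (Fin n) ℝ := (1 - G)⁻¹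

def Amat {n : ℕ} (G : Matrix (Fin n) (Fin n) ℝ) (r x g b : Fin n → ℝ) :
    Matrix (Fin n) (Fin n) ℝ :=
  1 - Gᵀ + (2 : ℝ) • (diagonal r * Hmat G * diagonal g)
    + (2 : ℝ) • (diagonal x * Hmat G * diagonal b)

def Dmat {n : ℕ} (G : Matrix (Fin n) (Fin n) ℝ) (r x g b : Fin n → ℝ) :
    Matrix (Fin n) (Fin n) ℝ :=
  (2 : ℝ) • ((Amat G r x g b)⁻¹ * diagonal r * (Hmat G - 1) * diagonal r)
    + (2 : ℝ) • ((Amat G r x g b)⁻¹ * diagonal x * (Hmat G - 1) * diagonal x)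
    + (Amat G r x g b)⁻¹ * diagonal (fun l => (r l) ^ 2 + (x l) ^ 2)

theorem Matrix.eq_add_inv_mul_mulVec_of_mulVec_eq {m R : Type*} [Fintype m] [DecidableEq m]
    [CommRing R] {A B : Matrix m m R} (hA : IsUnit A) {c u w f : m → R}
    (hu : A *ᵥ u = c + B *ᵥ f) (hw : A *ᵥ w = c) : u = w + (A⁻¹ * B) *ᵥ f := by
  have : Invertible A := hA.invertible
  have hdiff : B *ᵥ f = A *ᵥ (u - w) := by rw [mulVec_sub, hu, hw, add_sub_cancel_left]
  rw [← mulVec_mulVec, inv_mulVec_eq_vec hdiff, add_sub_cancel]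

theorem Matrix.diagonal_sq_add_sq {m R : Type*} [Fintype m] [DecidableEq m] [Semiring R]
    (r x : m → R) :
    diagonal (fun l => r l ^ 2 + x l ^ 2)
      = diagonal r * diagonal r + diagonal x * diagonal x := by
  simp only [diagonal_mul_diagonal, diagonal_add, sq]

theorem Amat_inv_mul_eq_neg_Dmat {n : ℕ} (G : Matrix (Fin n) (Fin n) ℝ) (r x g b : Fin n → ℝ) :
    (Amat G r x g b)⁻¹ * (-((2 : ℝ) • (diagonal r * Hmat G * diagonal r))
        - (2 : ℝ) • (diagonal x * Hmat G * diagonal x)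
        + diagonal (fun l => (r l) ^ 2 + (x l) ^ 2))
      = -Dmat G r x g b := by
  rw [Dmat, diagonal_sq_add_sq]
  generalize (Amat G r x g b)⁻¹ = C
  simp only [two_smul]
  noncomm_ring

theorem stmt2_general (n : ℕ) (G : Matrix (Fin n) (Fin n) ℝ)
    (r x g b p q f e : Fin n → ℝ) (v₀ : ℝ) (v vhat : Fin n → ℝ)
    (hA : IsUnit (Amat G r x g b))
    (hv : (Amat G r x g b).mulVec v =
      v₀ • e - (2 : ℝ) • (diagonal r * Hmat G).mulVec p
        - (2 : ℝ) • (diagonal x * Hmat G).mulVec q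
        + (-((2 : ℝ) • (diagonal r * Hmat G * diagonal r))
            - (2 : ℝ) • (diagonal x * Hmat G * diagonal x)
            + diagonal (fun l => (r l) ^ 2 + (x l) ^ 2)).mulVec f)
    (hvhat : (Amat G r x g b).mulVec vhat =
      v₀ • e - (2 : ℝ) • (diagonal r * Hmat G).mulVec p
        - (2 : ℝ) • (diagonal x * Hmat G).mulVec q) :
    v = vhat - (Dmat G r x g b).mulVec f := by
  rw [eq_add_inv_mul_mulVec_of_mulVec_eq hA hv hvhat, Amat_inv_mul_eq_neg_Dmat, neg_mulVec,
    sub_eq_add_neg]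

/-- equation (19) of the paper, `v = v̂ - D f`, relating the lossy and
lossless DistFlow voltage solutions. -/
theorem stmt2 (n : ℕ) (G : Matrix (Fin n) (Fin n) ℝ) (hG : IsUnit (1 - G))
    (r x g b p q f e : Fin n → ℝ) (v₀ : ℝ) (v vhat : Fin n → ℝ)
    (hA : IsUnit (Amat G r x g b))
    (hv : (Amat G r x g b).mulVec v =
      v₀ • e - (2 : ℝ) • (diagonal r * Hmat G).mulVec p
        - (2 : ℝ) • (diagonal x * Hmat G).mulVec q
        + (-((2 : ℝ) • (diagonal r * Hmat G * diagonal r))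
            - (2 : ℝ) • (diagonal x * Hmat G * diagonal x)
            + diagonal (fun l => (r l) ^ 2 + (x l) ^ 2)).mulVec f)
    (hvhat : (Amat G r x g b).mulVec vhat =
      v₀ • e - (2 : ℝ) • (diagonal r * Hmat G).mulVec p
        - (2 : ℝ) • (diagonal x * Hmat G).mulVec q) :
    v = vhat - (Dmat G r x g b).mulVec f :=
  stmt2_general n G r x g b p q f e v₀ v vhat hA hv hvhat
end
end

section
/- Lemma I, item 1: Let n : ℕ, let G : Matrix (Fin n) (Fin n) ℝ with 1 − G invertible and H := (1 − G)⁻¹ having all entries nonnegative, let r, x, g, b, p, q, e : Fin n → ℝ with r and x entrywise nonnegative, and v₀ : ℝ. Set M₁ := 2·diag(r)·H·diag(g), M₂ := 2·diag(x)·H·diag(b), A := 1 − Gᵀ + M₁ + M₂, assume A is invertible with C := A⁻¹, and set D := 2·C·diag(r)·(H − 1)·diag(r) + 2·C·diag(x)·(H − 1)·diag(x) + C·diag(fun l => (r l)^2 + (x l)^2). Assume every entry of D is nonnegative (condition (8.b)) and let f : Fin n → ℝ be entrywise nonnegative. Suppose v, v̂ satisfy A.mulVec v = v₀ • e − 2·diag(r)·H.mulVec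 p − 2·diag(x)·H.mulVec q + (−2·diag(r)·H·diag(r) − 2·diag(x)·H·diag(x) + diag(fun l => (r l)^2 + (x l)^2)).mulVec f and A.mulVec v̂ = v₀ • e − 2·diag(r)·H.mulVec p − 2·diag(x)·H.mulVec q, and suppose P, Q, P̲, Q̲ satisfy (1 − G).mulVec P = p + diag(g).mulVec v + diag(r).mulVec f, (1 − G).mulVec Q = q + diag(b).mulVec v + diag(x).mulVec f, (1 − G).mulVec P̲ = p + diag(g).mulVec v, and (1 − G).mulVec Q̲ = q + diag(b).mulVec v. Then, entrywise, v ≤ v̂, P̲ ≤ P, and Q̲ ≤ Q. -/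
/-!
Subtracting the lossless system from the lossy one leaves `A (v̂ - v) = L f`, where `L` is the
matrix of loss terms, so `v̂ - v = A⁻¹ L f = D f ≥ 0`; likewise `P - P̲ = H diag(r) f ≥ 0` and
`Q - Q̲ = H diag(x) f ≥ 0`. All three are one comparison principle: if `M u = M u' + N f` with
`M⁻¹ N ≥ 0` entrywise and `f ≥ 0`, then `u' ≤ u`.
-/

open Matrix

noncomputable section

namespace Matrix

variable {m n R : Type*} [Fintype n] [CommRing R] [PartialOrder R]
  [IsOrderedRing R]

theorem mulVec_nonneg {M : Matrix m n R} (hM : ∀ i j, 0 ≤ M i j) {u : n → R} (hu : 0 ≤ u) :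
    0 ≤ M *ᵥ u :=
  fun i => Finset.sum_nonneg fun j _ => mul_nonneg (hM i j) (hu j)

theorem mul_diagonal_nonneg [DecidableEq n] {M : Matrix m n R} (hM : ∀ i j, 0 ≤ M i j)
    {d : n → R} (hd : 0 ≤ d) (i : m) (j : n) : 0 ≤ (M * diagonal d) i j := by
  rw [mul_diagonal]
  exact mul_nonneg (hM i j) (hd j)

theorem le_of_mulVec_eq_mulVec_add [DecidableEq n] {M N : Matrix n n R} (hM : IsUnit M)
    (hMN : ∀ i j, 0 ≤ (M⁻¹ * N) i j) {u u' f : n → R} (hf : 0 ≤ f)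
    (h : M *ᵥ u = M *ᵥ u' + N *ᵥ f) : u' ≤ u := by
  have hdet := (isUnit_iff_isUnit_det M).mp hM
  have hMdiff : M *ᵥ (u - u') = N *ᵥ f := by
    rw [mulVec_sub, h, add_sub_cancel_left]
  have hdiff : u - u' = (M⁻¹ * N) *ᵥ f := by
    rw [← mulVec_mulVec, ← hMdiff, mulVec_mulVec, nonsing_inv_mul M hdet, one_mulVec]
  exact sub_nonneg.mp (hdiff ▸ mulVec_nonneg hMN hf)

end Matrix

def lossMat {n : ℕ} (G : Matrix (Fin n) (Fin n) ℝ) (r x : Fin n → ℝ) :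
    Matrix (Fin n) (Fin n) ℝ :=
  (2 : ℝ) • (diagonal r * (Hmat G - 1) * diagonal r)
    + (2 : ℝ) • (diagonal x * (Hmat G - 1) * diagonal x)
    + diagonal (fun l => (r l) ^ 2 + (x l) ^ 2)

theorem Dmat_eq_inv_mul_lossMat {n : ℕ} (G : Matrix (Fin n) (Fin n) ℝ) (r x g b : Fin n → ℝ) :
    Dmat G r x g b = (Amat G r x g b)⁻¹ * lossMat G r x := by
  simp only [Dmat, lossMat, mul_add, Matrix.mul_smul, Matrix.mul_assoc]

theorem neg_lossMat {n : ℕ} (G : Matrix (Fin n) (Fin n) ℝ) (r x : Fin n → ℝ) :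
    -lossMat G r x = -((2 : ℝ) • (diagonal r * Hmat G * diagonal r))
      - (2 : ℝ) • (diagonal x * Hmat G * diagonal x)
      + diagonal (fun l => (r l) ^ 2 + (x l) ^ 2) := by
  have hsq (d : Fin n → ℝ) : diagonal d * diagonal d = diagonal (fun l => d l ^ 2) := by
    simp only [diagonal_mul_diagonal, sq]
  have hsum : (diagonal (fun l => (r l) ^ 2 + (x l) ^ 2) : Matrix (Fin n) (Fin n) ℝ)
      = diagonal (fun l => (r l) ^ 2) + diagonal (fun l => (x l) ^ 2) :=
    (diagonal_add _ _).symm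
  simp only [lossMat, Matrix.mul_sub, Matrix.sub_mul, Matrix.mul_one]
  rw [hsq, hsq, hsum]
  module

/-- Lemma I, item 1.  Under nonnegativity of `H`, `r`, `x`, `D`
(condition (8.b)) and `f`, the lossless voltage `v̂` upper-bounds `v`, and the lossless
flows `P̲`, `Q̲` lower-bound `P`, `Q`. -/
theorem stmt3 (n : ℕ) (G : Matrix (Fin n) (Fin n) ℝ) (hG : IsUnit (1 - G))
    (hH : ∀ k l, 0 ≤ Hmat G k l)
    (r x g b p q e : Fin n → ℝ)
    (hr : ∀ l, 0 ≤ r l) (hx : ∀ l, 0 ≤ x l) (v₀ : ℝ)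
    (hA : IsUnit (Amat G r x g b))
    (h8b : ∀ k l, 0 ≤ Dmat G r x g b k l)
    (f : Fin n → ℝ) (hf : ∀ l, 0 ≤ f l)
    (v vhat P Q Pl Ql : Fin n → ℝ)
    (hv : (Amat G r x g b).mulVec v =
      v₀ • e - (2 : ℝ) • (diagonal r * Hmat G).mulVec p
        - (2 : ℝ) • (diagonal x * Hmat G).mulVec q
        + (-((2 : ℝ) • (diagonal r * Hmat G * diagonal r))
            - (2 : ℝ) • (diagonal x * Hmat G * diagonal x)
            + diagonal (fun l => (r l) ^ 2 + (x l) ^ 2)).mulVec f)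
    (hvhat : (Amat G r x g b).mulVec vhat =
      v₀ • e - (2 : ℝ) • (diagonal r * Hmat G).mulVec p
        - (2 : ℝ) • (diagonal x * Hmat G).mulVec q)
    (hP : (1 - G).mulVec P = p + (diagonal g).mulVec v + (diagonal r).mulVec f)
    (hQ : (1 - G).mulVec Q = q + (diagonal b).mulVec v + (diagonal x).mulVec f)
    (hPl : (1 - G).mulVec Pl = p + (diagonal g).mulVec v)
    (hQl : (1 - G).mulVec Ql = q + (diagonal b).mulVec v) :
    (∀ l, v l ≤ vhat l) ∧ (∀ l, Pl l ≤ P l) ∧ (∀ l, Ql l ≤ Q l) := by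
  have hvhat_v : (Amat G r x g b) *ᵥ vhat = (Amat G r x g b) *ᵥ v + lossMat G r x *ᵥ f := by
    rw [hvhat, hv, ← neg_lossMat, neg_mulVec]
    abel
  exact ⟨le_of_mulVec_eq_mulVec_add hA (Dmat_eq_inv_mul_lossMat G r x g b ▸ h8b) hf hvhat_v,
    le_of_mulVec_eq_mulVec_add hG (mul_diagonal_nonneg hH hr) hf (by rw [hP, hPl]),
    le_of_mulVec_eq_mulVec_add hG (mul_diagonal_nonneg hH hx) hf (by rw [hQ, hQl])⟩
end
end

section
/- Let n : ℕ, let G : Matrix (Fin n) (Fin n) ℝ with 1 − G invertible and H := (1 − G)⁻¹, and let p, g, v, r, f, P, P̲ : Fin n → ℝ satisfy (1 − G).mulVec P = p + diag(g).mulVec v + diag(r).mulVec f and (1 − G).mulVec P̲ = p + diag(g).mulVec v. Then P̲ = P − (H·diag(r)).mulVec f and P − diag(r).mulVec f − P̲ = ((H − 1)·diag(r)).mulVec f (equation (21) of the paper). In particular, if all entries of H and of H − 1 are nonnegative and r l * f l ≥ 0 for every l, then P̲ l ≤ P l − r l * f l ≤ P l for every l. -/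
/-! Subtracting the two balance equations gives `(1 - G) (P - P̲) = diag(r) f`, hence
`P - P̲ = H diag(r) f` with `H = (1 - G)⁻¹`. The inequalities follow because
`(H - 1) diag(r) f = (H - 1) (r * f)` is a nonnegative combination of the losses `r l * f l`. -/

open Matrix

namespace Matrix

variable {ι κ R : Type*} [Fintype ι]

theorem sub_eq_nonsing_inv_mulVec_of_mulVec_eq_add [DecidableEq ι] [CommRing R]
    {A : Matrix ι ι R} (hA : IsUnit A) {x y b : ι → R} (h : A *ᵥ x = A *ᵥ y + b) :
    x - y = A⁻¹ *ᵥ b := by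
  have hb : A *ᵥ (x - y) = b := by rw [mulVec_sub, h, add_sub_cancel_left]
  rw [← hb, mulVec_mulVec, nonsing_inv_mul A ((isUnit_iff_isUnit_det A).mp hA), one_mulVec]

theorem mul_diagonal_mulVec [DecidableEq ι] [CommSemiring R] (M : Matrix κ ι R) (r f : ι → R) :
    (M * diagonal r) *ᵥ f = M *ᵥ (r * f) := by
  rw [← mulVec_mulVec]
  congr 1
  funext i
  exact mulVec_diagonal r f i

theorem mulVec_apply_nonneg [Semiring R] [PartialOrder R] [IsOrderedRing R]
    {M : Matrix κ ι R} (hM : ∀ k i, 0 ≤ M k i) {x : ι → R} (hx : ∀ i, 0 ≤ x i) (k : κ) :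
    0 ≤ (M *ᵥ x) k :=
  Finset.sum_nonneg fun i _ => mul_nonneg (hM k i) (hx i)

end Matrix

/-- equation (21) of the paper, `P̲ = P - H diag(r) f` and
`P - diag(r) f - P̲ = (H - 1) diag(r) f`; in particular, under nonnegativity
assumptions, `P̲ ≤ P - diag(r) f ≤ P` entrywise. -/
theorem stmt4 (n : ℕ) (G : Matrix (Fin n) (Fin n) ℝ) (hG : IsUnit (1 - G))
    (p g v r f P Pl : Fin n → ℝ)
    (hP : (1 - G).mulVec P = p + (diagonal g).mulVec v + (diagonal r).mulVec f)
    (hPl : (1 - G).mulVec Pl = p + (diagonal g).mulVec v) :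
    Pl = P - ((1 - G)⁻¹ * diagonal r).mulVec f ∧
    P - (diagonal r).mulVec f - Pl = (((1 - G)⁻¹ - 1) * diagonal r).mulVec f ∧
    ((∀ k l, 0 ≤ (1 - G)⁻¹ k l) → (∀ k l, 0 ≤ ((1 - G)⁻¹ - 1) k l) →
      (∀ l, 0 ≤ r l * f l) →
      ∀ l, Pl l ≤ P l - r l * f l ∧ P l - r l * f l ≤ P l) := by
  have hdiff : P - Pl = ((1 - G)⁻¹ * diagonal r) *ᵥ f := by
    rw [← mulVec_mulVec]
    exact sub_eq_nonsing_inv_mulVec_of_mulVec_eq_add hG (by rw [hP, hPl])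
  have hloss : P - diagonal r *ᵥ f - Pl = (((1 - G)⁻¹ - 1) * diagonal r) *ᵥ f := by
    rw [sub_mul, one_mul, sub_mulVec, ← hdiff]
    abel
  refine ⟨by rw [← hdiff, sub_sub_cancel], hloss, fun _ hH1 hrf l => ⟨?_, by linarith [hrf l]⟩⟩
  have hloss_l := congrFun hloss l
  rw [mul_diagonal_mulVec] at hloss_l
  simp only [Pi.sub_apply, mulVec_diagonal] at hloss_l
  linarith [mulVec_apply_nonneg hH1 (x := r * f) hrf l]
end

section
/- Let n : ℕ, let G : Matrix (Fin n) (Fin n) ℝ with 1 − G invertible and H := (1 − G)⁻¹, let D : Matrix (Fin n) (Fin n) ℝ, and let p, g, r, f, v, v̂, P, P̂ : Fin n → ℝ satisfy (1 − G).mulVec P = p + diag(g).mulVec v + diag(r).mulVec f, (1 − G).mulVec P̂ = p + diag(g).mulVec v̂, and v = v̂ − D.mulVec f. Then P = P̂ + (H·(diag(r) − diag(g)·D)).mulVec f (equation (20) of the paper). -/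
open Matrix

theorem mulVec_sub_eq_of_mulVec_eq_add {l m n k α : Type*} [Fintype n] [Fintype k] [Fintype l]
    [Ring α] {A : Matrix m n α} {B : Matrix m k α} {C : Matrix m l α} {D : Matrix k l α}
    {p : m → α} {f : l → α} {v vhat : k → α} {P Phat : n → α}
    (hP : A *ᵥ P = p + B *ᵥ v + C *ᵥ f) (hPhat : A *ᵥ Phat = p + B *ᵥ vhat)
    (hv : v = vhat - D *ᵥ f) :
    A *ᵥ (P - Phat) = (C - B * D) *ᵥ f := by
  rw [mulVec_sub, hP, hPhat, hv, sub_mulVec, mulVec_sub, ← mulVec_mulVec]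
  abel

/-- equation (20) of the paper,
`P = P̂ + H (diag(r) - diag(g) D) f`. -/
theorem stmt5 (n : ℕ) (G : Matrix (Fin n) (Fin n) ℝ) (hG : IsUnit (1 - G))
    (D : Matrix (Fin n) (Fin n) ℝ)
    (p g r f v vhat P Phat : Fin n → ℝ)
    (hP : (1 - G).mulVec P = p + (diagonal g).mulVec v + (diagonal r).mulVec f)
    (hPhat : (1 - G).mulVec Phat = p + (diagonal g).mulVec vhat)
    (hv : v = vhat - D.mulVec f) :
    P = Phat + ((1 - G)⁻¹ * (diagonal r - diagonal g * D)).mulVec f := by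
  have := hG.invertible
  have hdiff := mulVec_sub_eq_of_mulVec_eq_add hP hPhat hv
  rw [← mulVec_mulVec, inv_mulVec_eq_vec hdiff.symm, add_sub_cancel]
end

section
/- Let n : ℕ, let G : Matrix (Fin n) (Fin n) ℝ with 1 − G invertible and H := (1 − G)⁻¹, let D : Matrix (Fin n) (Fin n) ℝ, and let p, g, r, f, v, v̂, P, P̂ : Fin n → ℝ satisfy (1 − G).mulVec P = p + diag(g).mulVec v + diag(r).mulVec f, (1 − G).mulVec P̂ = p + diag(g).mulVec v̂, and v = v̂ − D.mulVec f. If for some index l the l-th entry of (H·(diag(r) − diag(g)·D)).mulVec f is nonnegative, then P̂ l ≤ P l. -/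
/-! Subtracting the lossless equations from the lossy ones cancels `p`, and `v - v̂ = -D f`, so
`(1 - G) (P - P̂) = (diag r - diag g D) f`. Inverting `1 - G` gives `P - P̂ = H (diag r - diag g D) f`,
whose `l`-th entry is nonnegative by assumption. -/

open Matrix

theorem Matrix.mulVec_sub_eq_of_lossy_of_lossless
    {ι R : Type*} [Fintype ι] [DecidableEq ι] [CommRing R] {A D : Matrix ι ι R}
    {p g r f v vhat P Phat : ι → R}
    (hP : A *ᵥ P = p + diagonal g *ᵥ v + diagonal r *ᵥ f)
    (hPhat : A *ᵥ Phat = p + diagonal g *ᵥ vhat)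
    (hv : v = vhat - D *ᵥ f) :
    A *ᵥ (P - Phat) = (diagonal r - diagonal g * D) *ᵥ f := by
  rw [mulVec_sub, hP, hPhat, hv, sub_mulVec, ← mulVec_mulVec, mulVec_sub]
  abel

/-- on indices where the `l`-th entry of `H (diag(r) - diag(g) D) f` is
nonnegative (the set `𝒲ᵖ` of condition (11)), the lossless flow `P̂` lower-bounds the
true flow `P`. -/
theorem stmt7 (n : ℕ) (G : Matrix (Fin n) (Fin n) ℝ) (hG : IsUnit (1 - G))
    (D : Matrix (Fin n) (Fin n) ℝ)
    (p g r f v vhat P Phat : Fin n → ℝ)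
    (hP : (1 - G).mulVec P = p + (diagonal g).mulVec v + (diagonal r).mulVec f)
    (hPhat : (1 - G).mulVec Phat = p + (diagonal g).mulVec vhat)
    (hv : v = vhat - D.mulVec f)
    (l : Fin n)
    (hl : 0 ≤ ((1 - G)⁻¹ * (diagonal r - diagonal g * D)).mulVec f l) :
    Phat l ≤ P l := by
  let _ := hG.invertible
  have hdiff : P - Phat = ((1 - G)⁻¹ * (diagonal r - diagonal g * D)) *ᵥ f := by
    rw [← mulVec_mulVec]
    exact (inv_mulVec_eq_vec (mulVec_sub_eq_of_lossy_of_lossless hP hPhat hv).symm).symm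
  rwa [← hdiff, Pi.sub_apply, sub_nonneg] at hl
end

section
/- For all real numbers v, v', g, b, p, q with 0 < v', v' ≤ v, g ≥ 0, b ≥ 0, p + v * g ≤ 0, and q + v * b ≤ 0, one has ((p + v * g)^2 + (q + v * b)^2) / v ≤ ((p + v' * g)^2 + (q + v' * b)^2) / v'. -/
/- On `v > 0` each summand `(p + v g)² / v` is antitone while `p + v g ≤ 0`: increasing `v` moves
`p + v g` towards `0`, shrinking the numerator, and enlarges the denominator. -/

theorem sq_add_mul_div_le_of_add_mul_nonpos {v v' g p : ℝ} (hv' : 0 < v') (hvv : v' ≤ v)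
    (hg : 0 ≤ g) (hp : p + v * g ≤ 0) :
    (p + v * g) ^ 2 / v ≤ (p + v' * g) ^ 2 / v' := by
  have hshift : p + v' * g ≤ p + v * g := by gcongr
  have hsq : (p + v * g) ^ 2 ≤ (p + v' * g) ^ 2 := by
    rw [← neg_sq, ← neg_sq (p + v' * g)]
    exact pow_le_pow_left₀ (neg_nonneg.mpr hp) (neg_le_neg hshift) 2
  exact div_le_div₀ (sq_nonneg _) hsq hv' hvv

/-- the key inequality of the leaf-node base case of Lemma I, item 3. -/
theorem stmt8 (v v' g b p q : ℝ) (hv' : 0 < v') (hvv : v' ≤ v)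
    (hg : g ≥ 0) (hb : b ≥ 0) (hp : p + v * g ≤ 0) (hq : q + v * b ≤ 0) :
    ((p + v * g) ^ 2 + (q + v * b) ^ 2) / v ≤
      ((p + v' * g) ^ 2 + (q + v' * b) ^ 2) / v' := by
  rw [add_div, add_div]
  exact add_le_add (sq_add_mul_div_le_of_add_mul_nonpos hv' hvv hg hp)
    (sq_add_mul_div_le_of_add_mul_nonpos hv' hvv hb hq)
end

section
/- Let v₀ > 0, v ≥ 0, α ≥ 0 and q⁰, w be real numbers. Define the approximate droop injection q_approx := q⁰ − α * (v − w) (linear in the squared voltage v) and the exact droop injection q_exact := q⁰ − 2 * α * Real.sqrt v₀ * (Real.sqrt v − (w + v₀) / (2 * Real.sqrt v₀)) (linear in the voltage magnitude √v, with slope 2α√v₀ and reference voltage (w + v₀)/(2√v₀)). Then q_exact − q_approx = α * (Real.sqrt v − Real.sqrt v₀)^2; in particular q_approx ≤ q_exact, with equality when v = v₀. -/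
theorem droop_exact_sub_approx_eq_mul_sq {K : Type*} [Field K] [NeZero (2 : K)]
    (q0 α w s s₀ : K) (hs₀ : s₀ ≠ 0) :
    (q0 - 2 * α * s₀ * (s - (w + s₀ ^ 2) / (2 * s₀))) - (q0 - α * (s ^ 2 - w)) =
      α * (s - s₀) ^ 2 := by
  field_simp
  ring

/-- the mismatch between the exact Q-V droop injection (linear in the
voltage magnitude `√v`) and its squared-voltage approximation is exactly
`α (√v - √v₀)²`; in particular the approximation is a lower bound, with equality at
`v = v₀`. -/
theorem stmt9 (v₀ v α q0 w : ℝ) (hv₀ : 0 < v₀) (hv : 0 ≤ v) (hα : 0 ≤ α) :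
    (q0 - 2 * α * Real.sqrt v₀ * (Real.sqrt v - (w + v₀) / (2 * Real.sqrt v₀)))
        - (q0 - α * (v - w)) = α * (Real.sqrt v - Real.sqrt v₀) ^ 2 ∧
    q0 - α * (v - w) ≤
      q0 - 2 * α * Real.sqrt v₀ * (Real.sqrt v - (w + v₀) / (2 * Real.sqrt v₀)) ∧
    (v = v₀ →
      q0 - α * (v - w) =
        q0 - 2 * α * Real.sqrt v₀ * (Real.sqrt v - (w + v₀) / (2 * Real.sqrt v₀))) := by
  have key := droop_exact_sub_approx_eq_mul_sq q0 α w (Real.sqrt v) (Real.sqrt v₀)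
    (Real.sqrt_pos.2 hv₀).ne'
  rw [Real.sq_sqrt hv, Real.sq_sqrt hv₀.le] at key
  refine ⟨key, sub_nonneg.1 (key ▸ by positivity), ?_⟩
  rintro rfl
  rw [sub_self, sq, mul_zero, mul_zero, sub_eq_zero] at key
  exact key.symm
end

section
/- Lemma I, item 2: Assume the radial network encoding. Let r, x, g, b : Fin n → ℝ be entrywise nonnegative, p, q : Fin n → ℝ, v₀ > 0, and v : Fin n → ℝ with v l > 0 for all l. Suppose P, Q, f : Fin n → ℝ satisfy, for every l: P l = p l + g l * v l + r l * f l + ∑_{m ∈ children l} P m; Q l = q l + b l * v l + x l * f l + ∑_{m ∈ children l} Q m; and the exact current equation f l * v l = (P l − r l * f l)^2 + (Q l − x l * f l)^2. Suppose further that P̲, Q̲, P̄, Q̄, f̄ : Fin n → ℝ satisfy, for every l: P̲ l = p l + g l * v l + ∑_{m ∈ children l} P̲ m; Q̲ l = q l + b l * v l + ∑_{m ∈ children l} Q̲ m; P̄ l = p l + g l * v l + r l * f̄ l + ∑_{m ∈ children l} P̄ m; Q̄ l = q l + b l * v l + x l * f̄ l + ∑_{m ∈ children l} Q̄ m; and max((P̄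 l − r l * f̄ l)^2, (P̲ l)^2) + max((Q̄ l − x l * f̄ l)^2, (Q̲ l)^2) ≤ f̄ l * v l. Then for every l: f l ≤ f̄ l, P l ≤ P̄ l, and Q l ≤ Q̄ l. -/
/-!
Losses `r f`, `x f` are nonnegative, so summing the consumptions from the leaves upwards shows
that the lossless flows bound the receiving-end flows `P - r f`, `Q - x f` from below. The upper
bounds are then proved by the same leaves-to-root induction: if they hold at the children of `l`,
then `P l - r l f l ≤ P̄ l - r l f̄ l`, so the receiving-end flows at `l` are sandwiched between the
lossless and the upper-bound ones, their squares are bounded by the maxima in (3.e), and comparing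
the current equation with (3.e) gives `f l ≤ f̄ l`; adding the losses back gives `P l ≤ P̄ l`.
-/

noncomputable section

/-- Sum of a vector over the children of bus `l` in the radial network encoding. -/
def csum {n : ℕ} (up : Fin n → Option (Fin n)) (P : Fin n → ℝ) (l : Fin n) : ℝ :=
  ∑ m ∈ Finset.univ.filter (fun m => up m = some l), P m

section Radial

variable {n : ℕ} {up : Fin n → Option (Fin n)}

theorem csum_mono {P P' : Fin n → ℝ} {l : Fin n} (h : ∀ m, up m = some l → P m ≤ P' m) :
    csum up P l ≤ csum up P' l :=
  Finset.sum_le_sum fun m hm => h m (Finset.mem_filter.mp hm).2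

/-- Induction from the leaves to the root: children have larger indices, so `n - l` decreases. -/
theorem radial_induction (hup : ∀ l k, up l = some k → (k : ℕ) < (l : ℕ)) {C : Fin n → Prop}
    (step : ∀ l, (∀ m, up m = some l → C m) → C l) (l : Fin n) : C l :=
  (measure fun l : Fin n => n - (l : ℕ)).wf.induction l fun l ih =>
    step l fun m hm => ih m <| by
      have := hup m l hm
      have := m.isLt
      show n - (m : ℕ) < n - (l : ℕ)
      omega

theorem lossless_flow_le_sub_loss (hup : ∀ l k, up l = some k → (k : ℕ) < (l : ℕ))
    {s w P Pl : Fin n → ℝ} (hw : ∀ l, 0 ≤ w l)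
    (hP : ∀ l, P l = s l + w l + csum up P l) (hPl : ∀ l, Pl l = s l + csum up Pl l)
    (l : Fin n) : Pl l ≤ P l - w l :=
  radial_induction hup (C := fun l => Pl l ≤ P l - w l) (fun l ih => by
    have := csum_mono (up := up) (l := l) (P := Pl) (P' := P) fun m hm =>
      (ih m hm).trans (by linarith [hw m])
    linarith [hP l, hPl l]) l

end Radial

theorem sq_le_max_sq_of_le_of_le {a t u : ℝ} (hat : a ≤ t) (htu : t ≤ u) :
    t ^ 2 ≤ max (u ^ 2) (a ^ 2) := by
  rcases le_total 0 t with ht | ht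
  · exact le_max_of_le_left (by nlinarith)
  · exact le_max_of_le_right (by nlinarith)

theorem le_of_mul_eq_sq_add_sq_of_max_sq_le {f f' v a t u a' t' u' : ℝ} (hv : 0 < v)
    (hf : f * v = t ^ 2 + t' ^ 2) (hf' : max (u ^ 2) (a ^ 2) + max (u' ^ 2) (a' ^ 2) ≤ f' * v)
    (hat : a ≤ t) (htu : t ≤ u) (hat' : a' ≤ t') (htu' : t' ≤ u') : f ≤ f' :=
  le_of_mul_le_mul_right
    (by linarith [sq_le_max_sq_of_le_of_le hat htu, sq_le_max_sq_of_le_of_le hat' htu']) hv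

theorem stmt10_general (n : ℕ) (up : Fin n → Option (Fin n))
    (hup : ∀ l k, up l = some k → (k : ℕ) < (l : ℕ))
    (r x g b : Fin n → ℝ)
    (hr : ∀ l, 0 ≤ r l) (hx : ∀ l, 0 ≤ x l)
    (p q : Fin n → ℝ)
    (v : Fin n → ℝ) (hv : ∀ l, 0 < v l)
    (P Q f : Fin n → ℝ)
    (hP : ∀ l, P l = p l + g l * v l + r l * f l + csum up P l)
    (hQ : ∀ l, Q l = q l + b l * v l + x l * f l + csum up Q l)
    (hf : ∀ l, f l * v l = (P l - r l * f l) ^ 2 + (Q l - x l * f l) ^ 2)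
    (Pl Ql Pb Qb fb : Fin n → ℝ)
    (hPl : ∀ l, Pl l = p l + g l * v l + csum up Pl l)
    (hQl : ∀ l, Ql l = q l + b l * v l + csum up Ql l)
    (hPb : ∀ l, Pb l = p l + g l * v l + r l * fb l + csum up Pb l)
    (hQb : ∀ l, Qb l = q l + b l * v l + x l * fb l + csum up Qb l)
    (hfb : ∀ l, max ((Pb l - r l * fb l) ^ 2) ((Pl l) ^ 2)
        + max ((Qb l - x l * fb l) ^ 2) ((Ql l) ^ 2) ≤ fb l * v l) :
    ∀ l, f l ≤ fb l ∧ P l ≤ Pb l ∧ Q l ≤ Qb l := by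
  have hf0 (l : Fin n) : 0 ≤ f l :=
    nonneg_of_mul_nonneg_left (by rw [hf l]; positivity) (hv l)
  have hPlow := lossless_flow_le_sub_loss hup (s := fun l => p l + g l * v l)
    (fun l => mul_nonneg (hr l) (hf0 l)) hP hPl
  have hQlow := lossless_flow_le_sub_loss hup (s := fun l => q l + b l * v l)
    (fun l => mul_nonneg (hx l) (hf0 l)) hQ hQl
  refine radial_induction hup fun l ih => ?_
  have hPrecv : P l - r l * f l ≤ Pb l - r l * fb l := by
    linarith [hP l, hPb l, csum_mono fun m hm => (ih m hm).2.1]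
  have hQrecv : Q l - x l * f l ≤ Qb l - x l * fb l := by
    linarith [hQ l, hQb l, csum_mono fun m hm => (ih m hm).2.2]
  have hfl : f l ≤ fb l := le_of_mul_eq_sq_add_sq_of_max_sq_le (hv l) (hf l) (hfb l)
    (hPlow l) hPrecv (hQlow l) hQrecv
  exact ⟨hfl, by linarith [mul_le_mul_of_nonneg_left hfl (hr l)],
    by linarith [mul_le_mul_of_nonneg_left hfl (hx l)]⟩

/-- Lemma I, item 2.  If `(P, Q, v, f)` satisfies the exact per-line
DistFlow equations and `(P̲, Q̲, P̄, Q̄, f̄)` satisfies constraints (3.c)–(3.e), then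
`f ≤ f̄`, `P ≤ P̄`, `Q ≤ Q̄` entrywise. -/
theorem stmt10 (n : ℕ) (up : Fin n → Option (Fin n))
    (hup : ∀ l k, up l = some k → (k : ℕ) < (l : ℕ))
    (r x g b : Fin n → ℝ)
    (hr : ∀ l, 0 ≤ r l) (hx : ∀ l, 0 ≤ x l) (hg : ∀ l, 0 ≤ g l) (hb : ∀ l, 0 ≤ b l)
    (p q : Fin n → ℝ) (v₀ : ℝ) (hv₀ : 0 < v₀)
    (v : Fin n → ℝ) (hv : ∀ l, 0 < v l)
    (P Q f : Fin n → ℝ)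
    (hP : ∀ l, P l = p l + g l * v l + r l * f l + csum up P l)
    (hQ : ∀ l, Q l = q l + b l * v l + x l * f l + csum up Q l)
    (hf : ∀ l, f l * v l = (P l - r l * f l) ^ 2 + (Q l - x l * f l) ^ 2)
    (Pl Ql Pb Qb fb : Fin n → ℝ)
    (hPl : ∀ l, Pl l = p l + g l * v l + csum up Pl l)
    (hQl : ∀ l, Ql l = q l + b l * v l + csum up Ql l)
    (hPb : ∀ l, Pb l = p l + g l * v l + r l * fb l + csum up Pb l)
    (hQb : ∀ l, Qb l = q l + b l * v l + x l * fb l + csum up Qb l)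
    (hfb : ∀ l, max ((Pb l - r l * fb l) ^ 2) ((Pl l) ^ 2)
        + max ((Qb l - x l * fb l) ^ 2) ((Ql l) ^ 2) ≤ fb l * v l) :
    ∀ l, f l ≤ fb l ∧ P l ≤ Pb l ∧ Q l ≤ Qb l :=
  stmt10_general n up hup r x g b hr hx p q v hv P Q f hP hQ hf Pl Ql Pb Qb fb hPl hQl hPb hQb hfb
end
end

section
/- Let v, p, pava, α, w, M be real numbers with α ≥ 0, M ≥ |v − w|, and M ≥ α * |v − w|. Then the following are equivalent: (i) there exists y ∈ ({0, 1} : Set ℝ) such that w − M * (1 − y) ≤ v, v ≤ w + M * y, −M * (1 − y) ≤ p − (pava − α * (v − w)), p − (pava − α * (v − w)) ≤ M * (1 − y), −M * y ≤ p − pava, and p − pava ≤ M * y; (ii) p = pava − α * max (v − w) 0. -/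
/-!
For binary `y` the big-M constraints collapse to one branch of the droop characteristic:
with `y = 0` they force `v ≤ w` and `p = pava`, with `y = 1` they force `w ≤ v` and
`p = pava - α * (v - w)`, while the constraints attached to the inactive branch only ask
`|v - w| ≤ M` and `|α * (v - w)| ≤ M`, which the choice of `M` guarantees (using `0 ≤ α`).
-/

/-- Constraints (9.a)–(9.c) for a given value of the branch variable `y`. -/
def DroopBigM (v p pava α w M y : ℝ) : Prop :=
  w - M * (1 - y) ≤ v ∧ v ≤ w + M * y ∧
    -M * (1 - y) ≤ p - (pava - α * (v - w)) ∧
    p - (pava - α * (v - w)) ≤ M * (1 - y) ∧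
    -M * y ≤ p - pava ∧ p - pava ≤ M * y

section

variable {v p pava α w M : ℝ}

theorem droopBigM_zero_iff (hM : |v - w| ≤ M) (hαM : |α * (v - w)| ≤ M) :
    DroopBigM v p pava α w M 0 ↔ v ≤ w ∧ p = pava := by
  obtain ⟨hwv, -⟩ := abs_le.mp hM
  obtain ⟨hαvw, hαvw'⟩ := abs_le.mp hαM
  simp only [DroopBigM, sub_zero, mul_one, mul_zero, add_zero]
  constructor
  · rintro ⟨-, hv, -, -, hp, hp'⟩
    exact ⟨hv, le_antisymm (sub_nonpos.mp hp') (sub_nonneg.mp hp)⟩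
  · rintro ⟨hv, rfl⟩
    refine ⟨?_, hv, ?_, ?_, ?_, ?_⟩ <;> linarith

theorem droopBigM_one_iff (hM : |v - w| ≤ M) (hαM : |α * (v - w)| ≤ M) :
    DroopBigM v p pava α w M 1 ↔ w ≤ v ∧ p = pava - α * (v - w) := by
  obtain ⟨-, hvw⟩ := abs_le.mp hM
  obtain ⟨hαvw, hαvw'⟩ := abs_le.mp hαM
  simp only [DroopBigM, sub_self, mul_one, mul_zero, sub_zero]
  constructor
  · rintro ⟨hv, -, hp, hp', -, -⟩
    exact ⟨hv, le_antisymm (sub_nonpos.mp hp') (sub_nonneg.mp hp)⟩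
  · rintro ⟨hv, rfl⟩
    refine ⟨hv, ?_, ?_, ?_, ?_, ?_⟩ <;> linarith

end

theorem eq_sub_mul_max_iff {v p pava α w : ℝ} :
    p = pava - α * max (v - w) 0 ↔
      (v ≤ w ∧ p = pava) ∨ (w ≤ v ∧ p = pava - α * (v - w)) := by
  rcases le_total v w with hvw | hwv
  · rw [max_eq_right (sub_nonpos.mpr hvw)]
    constructor
    · exact fun hp => .inl ⟨hvw, by simpa using hp⟩
    · rintro (⟨-, rfl⟩ | ⟨hwv, rfl⟩)
      · simp
      · rw [le_antisymm hvw hwv]; simp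
  · rw [max_eq_left (sub_nonneg.mpr hwv)]
    constructor
    · exact fun hp => .inr ⟨hwv, hp⟩
    · rintro (⟨hvw, rfl⟩ | ⟨-, rfl⟩)
      · rw [le_antisymm hvw hwv]; simp
      · rfl

/-- correctness of the big-M mixed-integer linear model
(constraints (9.a)–(9.c)) of the piecewise-affine P-V droop characteristic. -/
theorem stmt16 (v p pava α w M : ℝ) (hα : 0 ≤ α)
    (hM1 : M ≥ |v - w|) (hM2 : M ≥ α * |v - w|) :
    (∃ y ∈ ({0, 1} : Set ℝ),
      w - M * (1 - y) ≤ v ∧ v ≤ w + M * y ∧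
      -M * (1 - y) ≤ p - (pava - α * (v - w)) ∧
      p - (pava - α * (v - w)) ≤ M * (1 - y) ∧
      -M * y ≤ p - pava ∧ p - pava ≤ M * y) ↔
    p = pava - α * max (v - w) 0 := by
  have hαM : |α * (v - w)| ≤ M := by rwa [abs_mul, abs_of_nonneg hα]
  change (∃ y ∈ ({0, 1} : Set ℝ), DroopBigM v p pava α w M y) ↔ _
  simp only [Set.mem_insert_iff, Set.mem_singleton_iff, exists_eq_or_imp, exists_eq_left]
  rw [eq_sub_mul_max_iff]
  exact or_congr (droopBigM_zero_iff hM1 hαM) (droopBigM_one_iff hM1 hαM)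
end
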